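/- arXiv:2105.06801 — 4 statements merged into one kernel-verified Lean document; each statement's English description precedes it below -/
import Mathlib

section
/- For every graph $G$, the number of spanning forests satisfies $F(G) \leq \prod_{v \in V(G)} (d_v + 1)$, where $d_v$ denotes the degree of vertex $v$ and a spanning forest is an acyclic subset of the edge set. -/
/-- The number of spanning forests of `G`: acyclic subsets of the edge set. -/
noncomputable def forestCount {V : Type*} (G : SimpleGraph V) : ℕ :=
  {A : Set (Sym2 V) | A ⊆ G.edgeSet ∧ (SimpleGraph.fromEdgeSet A).IsAcyclic}.ncard

private lemma pmap_val {V : Type*} (P : V → Prop) (o : Option V) (H : ∀ a ∈ o, P a) :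
    Option.map Subtype.val (o.pmap (fun w hw => (⟨w, hw⟩ : {u // P u})) H) = o := by
  cases o <;> rfl

open SimpleGraph in
private lemma exists_parent {V : Type*} (H : SimpleGraph V) (hac : H.IsAcyclic) :
    ∃ pa : V → V, ∀ e ∈ H.edgeSet, ∃ x, e = s(x, pa x) := by
  classical
  have hre : ∀ x, H.Reachable x (H.connectedComponentMk x).out := fun x =>
    SimpleGraph.ConnectedComponent.exact (Quot.out_eq (H.connectedComponentMk x)).symm
  have p : ∀ x, H.Path x (H.connectedComponentMk x).out := fun x => (hre x).some.toPath
  refine ⟨fun x => (p x).1.getVert 1, ?_⟩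
  intro e he
  induction e using Sym2.ind with
  | _ u v =>
    rw [SimpleGraph.mem_edgeSet] at he
    have hcc : H.connectedComponentMk v = H.connectedComponentMk u :=
      SimpleGraph.ConnectedComponent.connectedComponentMk_eq_of_adj he.symm
    have hr : (H.connectedComponentMk v).out = (H.connectedComponentMk u).out := by rw [hcc]
    set pv : H.Walk v (H.connectedComponentMk u).out := (p v : H.Walk _ _).copy rfl hr with hpv
    have hpvp : pv.IsPath := by
      rw [hpv, SimpleGraph.Walk.isPath_copy]; exact (p v).2
    by_cases hu : u ∈ pv.support
    · refine ⟨v, ?_⟩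
      have htp : (pv.takeUntil u hu) = Walk.cons he.symm Walk.nil := by
        have h1 : (⟨pv.takeUntil u hu, hpvp.takeUntil hu⟩ : H.Path v u) =
            ⟨Walk.cons he.symm Walk.nil, by simp [Walk.cons_isPath_iff, he.ne']⟩ :=
          hac.path_unique _ _
        exact congrArg Subtype.val h1
      have hsplit : pv = Walk.cons he.symm (pv.dropUntil u hu) := by
        conv_lhs => rw [← pv.take_spec hu]
        rw [htp]
        rfl
      have hg : pv.getVert 1 = u := by
        rw [hsplit, Walk.getVert_cons_succ, Walk.getVert_zero]
      have hg' : (p v).1.getVert 1 = u := by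
        rw [hpv] at hg
        simpa using hg
      simp only [hg']
      rw [Sym2.eq_swap]
    · refine ⟨u, ?_⟩
      have hcons : (Walk.cons he pv).IsPath := hpvp.cons hu
      have h1 : (p u) = ⟨Walk.cons he pv, hcons⟩ := hac.path_unique _ _
      have hg : (p u).1.getVert 1 = v := by
        rw [h1]
        simp [Walk.getVert_cons_succ, Walk.getVert_zero]
      simp only [hg]

private lemma exists_f {V : Type*} (G : SimpleGraph V) (A : Set (Sym2 V)) (hsub : A ⊆ G.edgeSet)
    (hac : (SimpleGraph.fromEdgeSet A).IsAcyclic) :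
    ∃ f : V → Option V, (∀ v w, f v = some w → G.Adj v w) ∧
      A = {e | ∃ v w, f v = some w ∧ e = s(v, w)} := by
  classical
  obtain ⟨pa, hpa⟩ := exists_parent (SimpleGraph.fromEdgeSet A) hac
  have hA : (SimpleGraph.fromEdgeSet A).edgeSet = A := by
    rw [SimpleGraph.edgeSet_fromEdgeSet]
    ext e
    simp only [Set.mem_diff, Set.mem_setOf_eq, and_iff_left_iff_imp]
    exact fun he => G.not_isDiag_of_mem_edgeSet (hsub he)
  refine ⟨fun v => if s(v, pa v) ∈ A then some (pa v) else none, ?_, ?_⟩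
  · intro v w hw
    by_cases h : s(v, pa v) ∈ A
    · simp only [h, if_true, Option.some.injEq] at hw
      subst hw
      exact (G.mem_edgeSet).mp (hsub h)
    · simp [h] at hw
  · ext e
    constructor
    · intro he
      obtain ⟨x, hx⟩ := hpa e (by rwa [hA])
      refine ⟨x, pa x, ?_, hx⟩
      have hmem : s(x, pa x) ∈ A := hx ▸ he
      simp only [hmem, if_true]
    · rintro ⟨v, w, hv, rfl⟩
      by_cases h : s(v, pa v) ∈ A
      · simp only [h, if_true, Option.some.injEq] at hv
        subst hv
        exact h
      · simp [h] at hv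

theorem forest_le_prod_degree_add_one {V : Type*} [Fintype V]
    (G : SimpleGraph V) [DecidableRel G.Adj] :
    forestCount G ≤ ∏ v : V, (G.degree v + 1) := by
  classical
  set S := {A : Set (Sym2 V) | A ⊆ G.edgeSet ∧ (SimpleGraph.fromEdgeSet A).IsAcyclic} with hS
  have key : ∃ Φ : S → (∀ v : V, Option {u // G.Adj v u}), Function.Injective Φ := by
    choose f hf1 hf2 using fun (A : S) => exists_f G A.1 A.2.1 A.2.2
    refine ⟨fun A v => (f A v).pmap (fun w hw => (⟨w, hw⟩ : {u // G.Adj v u}))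
      (fun w hw => hf1 A v w hw), ?_⟩
    intro A1 A2 h
    have hfe : f A1 = f A2 := by
      funext v
      have hv := congrArg (Option.map Subtype.val) (congrFun h v)
      beta_reduce at hv
      rwa [pmap_val, pmap_val] at hv
    apply Subtype.ext
    rw [hf2 A1, hf2 A2, hfe]
  obtain ⟨Φ, hΦ⟩ := key
  have h1 : forestCount G = Nat.card S := Nat.card_coe_set_eq S |>.symm
  calc forestCount G = Nat.card S := h1
    _ ≤ Nat.card (∀ v : V, Option {u // G.Adj v u}) := Nat.card_le_card_of_injective Φ hΦ
    _ = ∏ v, (G.degree v + 1) := by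
        rw [Nat.card_eq_fintype_card, Fintype.card_pi]
        refine Finset.prod_congr rfl fun v _ => ?_
        rw [Fintype.card_option]
        congr 1
        rw [Fintype.card_subtype]
        simp [SimpleGraph.degree, SimpleGraph.neighborFinset_eq_filter]
end

section
/- Suppose $p(x) = \prod_{i=1}^n (x - \alpha_i)$ and $q(x) = \prod_{j=1}^m (x - \beta_j)$ are monic real polynomials with all roots of absolute value less than $a > 0$, and suppose for every $k \geq 1$ that $\frac{1}{n}\sum_{i=1}^n \alpha_i^k \geq \frac{1}{m}\sum_{j=1}^m \beta_j^k$. Then $\frac{1}{n}\log p(a) \leq \frac{1}{m}\log q(a)$. -/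
/-!
Since `log (a - x) = log a + log (1 - x / a)` and `-log (1 - x / a) = ∑_{k ≥ 1} xᵏ / (k aᵏ)`,
summing over the roots gives `log a - (1/n) log p(a) = ∑_{k ≥ 1} ((1/n) ∑ᵢ αᵢᵏ) / (k aᵏ)`.
By hypothesis this series dominates the corresponding one for `q` term by term.
-/

open Real Finset

theorem Real.hasSum_log_sub_log_sub {x a : ℝ} (h : |x| < a) :
    HasSum (fun k : ℕ => x ^ (k + 1) / ((k + 1) * a ^ (k + 1))) (log a - log (a - x)) := by
  have ha : 0 < a := (abs_nonneg x).trans_lt h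
  have hxa : |x / a| < 1 := by rwa [abs_div, abs_of_pos ha, div_lt_one ha]
  have hsub : a - x = a * (1 - x / a) := by field_simp
  have hpos : 0 < 1 - x / a := by linarith [(abs_lt.mp hxa).2]
  convert hasSum_pow_div_log_of_abs_lt_one hxa using 1
  · ext k
    rw [div_pow]
    field_simp
  · rw [hsub, log_mul ha.ne' hpos.ne']
    ring

theorem Real.hasSum_log_sub_log_prod_sub {ι : Type*} [Fintype ι] {γ : ι → ℝ} {a : ℝ}
    (h : ∀ i, |γ i| < a) :
    HasSum (fun k : ℕ => (∑ i, γ i ^ (k + 1)) / ((k + 1) * a ^ (k + 1)))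
      (Fintype.card ι * log a - log (∏ i, (a - γ i))) := by
  have hpos : ∀ i, a - γ i ≠ 0 := fun i => by linarith [(abs_lt.mp (h i)).2]
  simp_rw [sum_div]
  rw [log_prod fun i _ => hpos i, ← nsmul_eq_mul, ← card_univ, ← sum_const, ← sum_sub_distrib]
  exact hasSum_sum fun i _ => hasSum_log_sub_log_sub (h i)

theorem Real.hasSum_log_sub_log_prod_sub_div_card {ι : Type*} [Fintype ι] [Nonempty ι]
    {γ : ι → ℝ} {a : ℝ} (h : ∀ i, |γ i| < a) :
    HasSum (fun k : ℕ => (∑ i, γ i ^ (k + 1)) / Fintype.card ι / ((k + 1) * a ^ (k + 1)))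
      (log a - log (∏ i, (a - γ i)) / Fintype.card ι) := by
  have hcard : (Fintype.card ι : ℝ) ≠ 0 := Nat.cast_ne_zero.mpr Fintype.card_ne_zero
  have hsum := (hasSum_log_sub_log_prod_sub h).div_const (Fintype.card ι)
  rw [sub_div, mul_div_cancel_left₀ _ hcard] at hsum
  exact hsum.congr_fun fun k => div_right_comm _ _ _

theorem log_prod_compare (n m : ℕ) (hn : 0 < n) (hm : 0 < m)
    (α : Fin n → ℝ) (β : Fin m → ℝ) (a : ℝ) (ha : 0 < a)
    (hα : ∀ i, |α i| < a) (hβ : ∀ j, |β j| < a)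
    (hpow : ∀ k : ℕ, 1 ≤ k → (∑ i, α i ^ k) / n ≥ (∑ j, β j ^ k) / m) :
    Real.log (∏ i, (a - α i)) / n ≤ Real.log (∏ j, (a - β j)) / m := by
  have := Fin.pos_iff_nonempty.mp hn
  have := Fin.pos_iff_nonempty.mp hm
  have hα_series := Real.hasSum_log_sub_log_prod_sub_div_card hα
  have hβ_series := Real.hasSum_log_sub_log_prod_sub_div_card hβ
  simp only [Fintype.card_fin] at hα_series hβ_series
  have hle := hasSum_le (fun k => div_le_div_of_nonneg_right (hpow (k + 1) le_add_self)
    (by positivity)) hβ_series hα_series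
  linarith
end

section
/- For every integer $d \geq 2$, $\frac{(d-1)^{d-1}}{(d^2 - 2d - 1)^{d/2 - 1}} < d$ whenever $d^2 - 2d - 1 > 0$, i.e., for all integers $d \geq 3$. -/
/-! Write `d = n + 2` and square: the claim becomes
`(n + 1) ^ (2 (n + 1)) < (n + 2) ^ 2 ((n + 1) ^ 2 - 2) ^ n`, i.e.
`(n + 1) ^ 2 < (n + 2) ^ 2 (1 - x) ^ n` with `x = 2 / (n + 1) ^ 2`.
Bernoulli's bound `(1 - x) ^ n ≥ 1 - n x` is too weak for this, but the binomial expansion of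
`(1 - x) ^ n` truncated after its cubic term is still a lower bound, and with it the claim reduces
to the positivity of a polynomial in `n`. -/

theorem one_sub_pow_ge_cubic (n : ℕ) {x : ℝ} (hx : x ≤ 1) :
    1 - n * x + n * (n - 1) / 2 * x ^ 2 - n * (n - 1) * (n - 2) / 6 * x ^ 3 ≤ (1 - x) ^ n := by
  induction n with
  | zero => norm_num
  | succ n ih =>
    have hcoeff : (0 : ℝ) ≤ n * (n - 1) * (n - 2) := by
      rcases Nat.lt_or_ge n 3 with hn | hn
      · interval_cases n <;> norm_num
      · have hn : (3 : ℝ) ≤ n := by exact_mod_cast hn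
        exact mul_nonneg (mul_nonneg (by linarith) (by linarith)) (by linarith)
    -- writing `T n` for the left-hand side, `T (n + 1) = (1 - x) * T n - n (n - 1) (n - 2) / 6 * x ^ 4`
    have hquartic : 0 ≤ n * (n - 1) * (n - 2) / 6 * x ^ 4 := by positivity
    calc _ ≤ (1 - x) * (1 - n * x + n * (n - 1) / 2 * x ^ 2
            - n * (n - 1) * (n - 2) / 6 * x ^ 3) := by
          push_cast; linarith
      _ ≤ (1 - x) * (1 - x) ^ n := mul_le_mul_of_nonneg_left ih (sub_nonneg.2 hx)
      _ = (1 - x) ^ (n + 1) := (pow_succ' _ _).symm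

theorem sq_lt_sq_mul_cubic (n : ℕ) :
    ((n : ℝ) + 1) ^ 2 < ((n : ℝ) + 2) ^ 2 *
      (1 - n * (2 / ((n : ℝ) + 1) ^ 2) + n * (n - 1) / 2 * (2 / ((n : ℝ) + 1) ^ 2) ^ 2
        - n * (n - 1) * (n - 2) / 6 * (2 / ((n : ℝ) + 1) ^ 2) ^ 3) := by
  rw [← sub_pos]
  field_simp
  ring_nf
  have hn := n.cast_nonneg (α := ℝ)
  nlinarith [sq_nonneg ((n : ℝ) - 1), pow_nonneg hn 3, pow_nonneg hn 4, pow_nonneg hn 5,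
    pow_nonneg hn 6]

theorem pow_lt_sq_mul_sq_sub_two_pow (n : ℕ) (hn : 1 ≤ n) :
    ((n : ℝ) + 1) ^ (2 * (n + 1)) < ((n : ℝ) + 2) ^ 2 * (((n : ℝ) + 1) ^ 2 - 2) ^ n := by
  have hn : (1 : ℝ) ≤ n := by exact_mod_cast hn
  set x : ℝ := 2 / ((n : ℝ) + 1) ^ 2 with hx
  have hx₁ : x ≤ 1 := by rw [hx, div_le_one (by positivity)]; nlinarith
  have hfactor : ((n : ℝ) + 1) ^ 2 - 2 = ((n : ℝ) + 1) ^ 2 * (1 - x) := by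
    rw [hx]; field_simp
  calc ((n : ℝ) + 1) ^ (2 * (n + 1)) = (((n : ℝ) + 1) ^ 2) ^ n * ((n : ℝ) + 1) ^ 2 := by
        rw [mul_add_one, pow_add, pow_mul]
    _ < (((n : ℝ) + 1) ^ 2) ^ n * (((n : ℝ) + 2) ^ 2 * (1 - n * x + n * (n - 1) / 2 * x ^ 2
        - n * (n - 1) * (n - 2) / 6 * x ^ 3)) := by
        gcongr
        exact sq_lt_sq_mul_cubic n
    _ ≤ (((n : ℝ) + 1) ^ 2) ^ n * (((n : ℝ) + 2) ^ 2 * (1 - x) ^ n) := by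
        gcongr
        exact one_sub_pow_ge_cubic n hx₁
    _ = ((n : ℝ) + 2) ^ 2 * (((n : ℝ) + 1) ^ 2 - 2) ^ n := by
        rw [hfactor, mul_pow]; ring

theorem rpow_half_natCast_sq {b : ℝ} (hb : 0 ≤ b) (n : ℕ) : (b ^ ((n : ℝ) / 2)) ^ 2 = b ^ n := by
  rw [← Real.rpow_natCast _ 2, ← Real.rpow_mul hb, ← Real.rpow_natCast]
  congr 1
  push_cast
  ring

theorem conjectured_rate_lt_d (d : ℕ) (hd : 3 ≤ d) :
    ((d : ℝ) - 1) ^ ((d : ℝ) - 1)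
        / ((d : ℝ) ^ 2 - 2 * d - 1) ^ ((d : ℝ) / 2 - 1)
      < d := by
  obtain ⟨n, rfl⟩ : ∃ n, d = n + 2 := ⟨d - 2, by omega⟩
  have hn : 1 ≤ n := by omega
  have hbase : (0 : ℝ) < ((n : ℝ) + 1) ^ 2 - 2 := by
    have : (1 : ℝ) ≤ n := by exact_mod_cast hn
    nlinarith
  have hnum : ((↑(n + 2) : ℝ) - 1) ^ ((↑(n + 2) : ℝ) - 1) = ((n : ℝ) + 1) ^ (n + 1) := by
    rw [← Real.rpow_natCast]; push_cast; ring_nf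
  have hden : ((↑(n + 2) : ℝ) ^ 2 - 2 * ↑(n + 2) - 1) ^ ((↑(n + 2) : ℝ) / 2 - 1)
      = (((n : ℝ) + 1) ^ 2 - 2) ^ ((n : ℝ) / 2) := by
    push_cast; ring_nf
  rw [hnum, hden, div_lt_iff₀ (by positivity)]
  apply lt_of_pow_lt_pow_left₀ 2 (by positivity)
  rw [mul_pow, rpow_half_natCast_sq hbase.le, ← pow_mul']
  push_cast
  exact pow_lt_sq_mul_sq_sub_two_pow n hn
end

section
/- For all integers $r \geq 1$ and $k \geq 3$, let $G_{r,k}$ be the graph obtained by gluing $r$ cycles of length $k$ at a single common vertex. Then the number of spanning forests satisfies $F(G_{r,k}) = (2^k - 1)^r$, while $\prod_{v \in V(G_{r,k})} d_v = (2r) \cdot 2^{r(k-1)}$; in particular, for each fixed $k$ there exists $r$ such that $F(G_{r,k}) > \prod_{v} d_v$. -/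
/-- The graph obtained by gluing `r` cycles of length `k` at a single common
vertex (`none`): the `j`-th cycle is `none, (j,0), (j,1), …, (j,k-2), none`. -/
def glueGraph (r k : ℕ) : SimpleGraph (Option (Fin r × Fin (k - 1))) :=
  SimpleGraph.fromRel fun x y =>
    match x, y with
    | none, some (_, i) => (i : ℕ) = 0 ∨ (i : ℕ) = k - 2
    | some (j, i), some (j', i') => j = j' ∧ (i' : ℕ) = (i : ℕ) + 1
    | _, _ => False

/-!
Every edge of `G_{r,k}` lies on exactly one of its `r` petals, so an edge set is the choice of a
subset of each petal. A full petal is a cycle. Conversely, a cycle that uses one edge of a petal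
runs along the whole petal, because all vertices of a petal other than the glue vertex have degree
two; hence an edge set is acyclic iff it omits an edge from every petal, and there are `2^k - 1`
such choices per petal.
-/

open SimpleGraph

/-- A cycle uses exactly two edges at each of its vertices, hence all edges at a vertex of
degree two. -/
theorem SimpleGraph.Walk.IsCycle.mem_edges_of_ncard_neighborSet_eq_two {V : Type*}
    {G H : SimpleGraph V} (hHG : H ≤ G) {u v w : V} {c : H.Walk u u} (hc : c.IsCycle)
    (hv : v ∈ c.support) (hdeg : (G.neighborSet v).ncard = 2) (hvw : G.Adj v w) :
    s(v, w) ∈ c.edges := by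
  have hsub : c.toSubgraph.neighborSet v ⊆ G.neighborSet v :=
    fun w hw => hHG (c.toSubgraph.adj_sub hw)
  have heq := Set.eq_of_subset_of_ncard_le hsub
    (by rw [hdeg, hc.ncard_neighborSet_toSubgraph_eq_two hv])
    (Set.finite_of_ncard_ne_zero (by omega))
  rw [← Walk.adj_toSubgraph_iff_mem_edges]
  change w ∈ c.toSubgraph.neighborSet v
  rwa [heq]

theorem Set.ncard_setOf_forall_exists_prod_notMem {ι α : Type*} [Fintype ι] [Fintype α] :
    {B : Set (ι × α) | ∀ i, ∃ a, (i, a) ∉ B}.ncard =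
      (2 ^ Fintype.card α - 1) ^ Fintype.card ι := by
  classical
  let e : {B : Set (ι × α) // ∀ i, ∃ a, (i, a) ∉ B} ≃ (ι → {s : Set α // s ≠ Set.univ}) :=
    ((Equiv.curry ι α Prop).subtypeEquiv fun B =>
      forall_congr' fun i => (Set.ne_univ_iff_exists_notMem _).symm).trans Equiv.subtypePiEquivPi
  rw [← Nat.card_coe_set_eq, Set.coe_ofPred, Nat.card_congr e, Nat.card_eq_fintype_card,
    Fintype.card_pi, Fintype.card_subtype_compl, Fintype.card_set, Fintype.card_subtype_eq,
    Finset.prod_const, Finset.card_univ]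

theorem Fin.two_ne_zero_of_add_three (n : ℕ) : (2 : Fin (n + 3)) ≠ 0 := by
  simp [Fin.ext_iff, Nat.mod_eq_of_lt (by omega : 2 < n + 3)]

theorem Fin.sub_one_ne_add_one {n : ℕ} (m : Fin (n + 3)) : m - 1 ≠ m + 1 := by
  intro h
  apply Fin.two_ne_zero_of_add_three n
  calc (2 : Fin (n + 3)) = m + 1 - (m - 1) := by abel
    _ = 0 := by rw [h, sub_self]

namespace glueGraph

variable {r n : ℕ}

/-- The `j`-th petal, parametrised by `cycleGraph (n + 3)`: `0 ↦ none` and `i + 1 ↦ (j, i)`. -/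
def petal (j : Fin r) : Fin (n + 3) → Option (Fin r × Fin (n + 3 - 1)) :=
  Fin.cases none fun i => some (j, i)

def petalEdge (e : Fin r × Fin (n + 3)) : Sym2 (Option (Fin r × Fin (n + 3 - 1))) :=
  s(petal e.1 e.2, petal e.1 (e.2 + 1))

lemma petalEdge_mk (j : Fin r) (m : Fin (n + 3)) :
    petalEdge (j, m) = s(petal j m, petal j (m + 1)) := rfl

@[simp] lemma petal_zero (j : Fin r) : petal (n := n) j 0 = none := rfl
@[simp] lemma petal_succ (j : Fin r) (i : Fin (n + 2)) : petal j i.succ = some (j, i) := rfl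

lemma petal_eq_petal_iff {j j' : Fin r} {a b : Fin (n + 3)} :
    petal j a = petal j' b ↔ a = 0 ∧ b = 0 ∨ j = j' ∧ a = b := by
  cases a using Fin.cases <;> cases b using Fin.cases <;>
    simp [Fin.succ_ne_zero, (Fin.succ_ne_zero _).symm]

lemma petal_injective (j : Fin r) : Function.Injective (petal (n := n) j) := fun a b h => by
  rcases petal_eq_petal_iff.mp h with ⟨rfl, rfl⟩ | ⟨-, rfl⟩ <;> rfl

lemma petalEdge_injective : Function.Injective (petalEdge (r := r) (n := n)) := by
  rintro ⟨j, a⟩ ⟨j', b⟩ h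
  have := Fin.two_ne_zero_of_add_three n
  simp only [petalEdge, Sym2.eq_iff, petal_eq_petal_iff] at h
  simp only [Prod.mk.injEq]
  grind

lemma adj_petal_add_one (j : Fin r) (m : Fin (n + 3)) :
    (glueGraph r (n + 3)).Adj (petal j m) (petal j (m + 1)) := by
  cases m using Fin.lastCases with
  | last =>
    rw [Fin.last_add_one, ← Fin.succ_last, petal_succ, petal_zero]
    simp [glueGraph]
  | cast i =>
    rw [Fin.coeSucc_eq_succ, petal_succ]
    cases i using Fin.cases with
    | zero => simp [glueGraph]
    | succ i =>
      rw [← Fin.succ_castSucc, petal_succ]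
      simp [glueGraph, Fin.castSucc_lt_succ.ne]

lemma edgeSet_eq_range : (glueGraph r (n + 3)).edgeSet = Set.range petalEdge := by
  refine Set.Subset.antisymm (fun e he => ?_) ?_
  · have hnone (j : Fin r) (i : Fin (n + 2)) (h : i = 0 ∨ (i : ℕ) = n + 1) :
        s(none, some (j, i)) ∈ Set.range petalEdge := by
      rcases h with rfl | h
      · exact ⟨(j, 0), by
          rw [petalEdge_mk, zero_add, ← Fin.succ_zero_eq_one, petal_succ, petal_zero]; rfl⟩
      · obtain rfl : i = Fin.last _ := Fin.ext h
        exact ⟨(j, Fin.last _), by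
          rw [petalEdge_mk, Fin.last_add_one, ← Fin.succ_last, petal_succ, petal_zero,
            Sym2.eq_swap]; rfl⟩
    have hsome (j : Fin r) (i i' : Fin (n + 2)) (h : (i' : ℕ) = i + 1) :
        s(some (j, i), some (j, i')) ∈ Set.range petalEdge := by
      refine ⟨(j, i'.castSucc), ?_⟩
      rw [petalEdge_mk, Fin.coeSucc_eq_succ, show i'.castSucc = i.succ from Fin.ext (by simp [h]),
        petal_succ, petal_succ]
      rfl
    induction e using Sym2.ind with | _ x y => ?_
    rcases x with _ | ⟨j, i⟩ <;> rcases y with _ | ⟨j', i'⟩ <;>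
      simp only [glueGraph, mem_edgeSet, fromRel_adj] at he
    · simp at he
    · exact hnone j' i' (by simpa using he)
    · rw [Sym2.eq_swap]; exact hnone j i (by simpa using he)
    · rcases he.2 with ⟨rfl, h⟩ | ⟨rfl, h⟩
      · exact hsome j i i' h
      · rw [Sym2.eq_swap]; exact hsome j' i' i h
  · rintro _ ⟨⟨j, m⟩, rfl⟩
    exact adj_petal_add_one j m

lemma neighborSet_petal (j : Fin r) {m : Fin (n + 3)} (hm : m ≠ 0) :
    (glueGraph r (n + 3)).neighborSet (petal j m) = {petal j (m - 1), petal j (m + 1)} := by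
  ext w
  rw [mem_neighborSet, ← mem_edgeSet, edgeSet_eq_range]
  simp only [Set.mem_range, Prod.exists, petalEdge, Sym2.eq_iff, petal_eq_petal_iff, hm,
    and_false, false_or, Set.mem_insert_iff, Set.mem_singleton_iff]
  constructor
  · rintro ⟨a, b, ⟨⟨rfl, rfl⟩, rfl⟩ | ⟨rfl, rfl, rfl⟩⟩
    · exact Or.inr rfl
    · exact Or.inl (by rw [add_sub_cancel_right])
  · rintro (rfl | rfl)
    · exact ⟨j, m - 1, Or.inr ⟨rfl, rfl, sub_add_cancel m 1⟩⟩
    · exact ⟨j, m, Or.inl ⟨⟨rfl, rfl⟩, rfl⟩⟩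

lemma ncard_neighborSet_petal (j : Fin r) {m : Fin (n + 3)} (hm : m ≠ 0) :
    ((glueGraph r (n + 3)).neighborSet (petal j m)).ncard = 2 := by
  rw [neighborSet_petal j hm, Set.ncard_pair ((petal_injective j).ne _)]
  exact Fin.sub_one_ne_add_one m

lemma neighborSet_none :
    (glueGraph r (n + 3)).neighborSet none =
      some '' (Set.univ ×ˢ {0, Fin.last (n + 1)}) := by
  ext y
  rcases y with _ | ⟨j, i⟩
  · simp [glueGraph]
  · simp [glueGraph, Fin.ext_iff (b := Fin.last (n + 1))]

lemma ncard_neighborSet_none : ((glueGraph r (n + 3)).neighborSet none).ncard = 2 * r := by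
  rw [neighborSet_none, Set.ncard_image_of_injective _ (Option.some_injective _), Set.ncard_prod,
    Set.ncard_univ, Nat.card_eq_fintype_card, Fintype.card_fin,
    Set.ncard_pair (Fin.last_pos.ne : (0 : Fin (n + 2)) ≠ _), mul_comm]

theorem prod_ncard_neighborSet :
    ∏ v, ((glueGraph r (n + 3)).neighborSet v).ncard = 2 * r * 2 ^ (r * (n + 2)) := by
  rw [Fintype.prod_option, ncard_neighborSet_none]
  congr 1
  calc ∏ v : Fin r × Fin (n + 2), ((glueGraph r (n + 3)).neighborSet (some v)).ncard
      = ∏ _v : Fin r × Fin (n + 2), 2 :=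
        Finset.prod_congr rfl fun ⟨j, i⟩ _ => ncard_neighborSet_petal j (Fin.succ_ne_zero i)
    _ = 2 ^ (r * (n + 2)) := by simp

section Cycle

variable {H : SimpleGraph (Option (Fin r × Fin (n + 3 - 1)))}
  {u : Option (Fin r × Fin (n + 3 - 1))} {c : H.Walk u u}

lemma petalEdge_mem_edges_of_mem_support (hH : H ≤ glueGraph r (n + 3)) (hc : c.IsCycle)
    (j : Fin r) {i : Fin (n + 2)} (hi : some (j, i) ∈ c.support) :
    petalEdge (j, i.castSucc) ∈ c.edges ∧ petalEdge (j, i.succ) ∈ c.edges := by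
  have key := fun w (hw : w ∈ (glueGraph r (n + 3)).neighborSet (petal j i.succ)) =>
    hc.mem_edges_of_ncard_neighborSet_eq_two hH hi
      (ncard_neighborSet_petal j (Fin.succ_ne_zero i)) hw
  rw [neighborSet_petal j (Fin.succ_ne_zero i)] at key
  constructor
  · have := key _ (Set.mem_insert _ _)
    rw [(eq_sub_of_add_eq Fin.coeSucc_eq_succ).symm, Sym2.eq_swap] at this
    rwa [petalEdge_mk, Fin.coeSucc_eq_succ]
  · exact key _ (Set.mem_insert_of_mem _ rfl)

lemma petalEdge_mem_edges (hH : H ≤ glueGraph r (n + 3)) (hc : c.IsCycle) (j : Fin r)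
    {m₀ : Fin (n + 3)} (h₀ : petalEdge (j, m₀) ∈ c.edges) (m : Fin (n + 3)) :
    petalEdge (j, m) ∈ c.edges := by
  have hzero : petalEdge (j, 0) ∈ c.edges := by
    induction m₀ using Fin.induction with
    | zero => exact h₀
    | succ i ih =>
      exact ih (petalEdge_mem_edges_of_mem_support hH hc j (c.fst_mem_support_of_mem_edges h₀)).1
  induction m using Fin.induction with
  | zero => exact hzero
  | succ i ih =>
    have hi := c.snd_mem_support_of_mem_edges ih
    rw [Fin.coeSucc_eq_succ, petal_succ] at hi
    exact (petalEdge_mem_edges_of_mem_support hH hc j hi).2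

end Cycle

theorem isAcyclic_fromEdgeSet_image_petalEdge_iff {B : Set (Fin r × Fin (n + 3))} :
    (fromEdgeSet (petalEdge '' B)).IsAcyclic ↔ ∀ j, ∃ m, (j, m) ∉ B := by
  constructor
  · intro hB j
    by_contra! hj
    let f : cycleGraph (n + 3) →g fromEdgeSet (petalEdge '' B) :=
      ⟨petal j, fun {a b} hab => by
        rw [fromEdgeSet_adj]
        refine ⟨?_, (petal_injective j).ne hab.ne⟩
        rcases (cycleGraph_adj (n := n + 1)).mp hab with h | h
        · rw [sub_eq_iff_eq_add'.mp h, Sym2.eq_swap]; exact ⟨(j, b), hj b, rfl⟩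
        · rw [sub_eq_iff_eq_add'.mp h]; exact ⟨(j, a), hj a, rfl⟩⟩
    exact hB.comap f (petal_injective j) _ cycleGraph.isCycle_cycle
  · intro hB u c hc
    have hH : fromEdgeSet (petalEdge '' B) ≤ glueGraph r (n + 3) := by
      rw [fromEdgeSet_le, edgeSet_eq_range]
      exact Set.sdiff_subset.trans (Set.image_subset_range _ _)
    have hedges {e} (he : e ∈ c.edges) : e ∈ petalEdge '' B :=
      (edgeSet_fromEdgeSet (petalEdge '' B) ▸ c.edges_subset_edgeSet he).1
    obtain ⟨⟨j, m₀⟩, -, hm₀⟩ := hedges (c.mk_start_snd_mem_edges hc.not_nil)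
    obtain ⟨m, hm⟩ := hB j
    obtain ⟨p, hp, hpm⟩ :=
      hedges (petalEdge_mem_edges hH hc j (hm₀ ▸ c.mk_start_snd_mem_edges hc.not_nil) m)
    exact hm (petalEdge_injective hpm ▸ hp)

theorem forestCount_eq : forestCount (glueGraph r (n + 3)) = (2 ^ (n + 3) - 1) ^ r := by
  have : {A | A ⊆ (glueGraph r (n + 3)).edgeSet ∧ (fromEdgeSet A).IsAcyclic} =
      Set.image petalEdge '' {B | ∀ j, ∃ m, (j, m) ∉ B} := by
    ext A
    rw [edgeSet_eq_range]
    constructor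
    · rintro ⟨hA, hacyc⟩
      obtain ⟨B, rfl⟩ := Set.subset_range_iff_exists_image_eq.mp hA
      exact ⟨B, isAcyclic_fromEdgeSet_image_petalEdge_iff.mp hacyc, rfl⟩
    · rintro ⟨B, hB, rfl⟩
      exact ⟨Set.image_subset_range _ _, isAcyclic_fromEdgeSet_image_petalEdge_iff.mpr hB⟩
  rw [forestCount, this,
    Set.ncard_image_of_injective _ (Set.image_injective.mpr petalEdge_injective),
    Set.ncard_setOf_forall_exists_prod_notMem, Fintype.card_fin, Fintype.card_fin]

end glueGraph

lemma eight_mul_pow_four_lt {x : ℕ} (hx : 4 ≤ x) : 8 * x ^ 4 < (2 * x - 1) ^ 4 := by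
  have h := Nat.pow_le_pow_left (show 7 * x ≤ 4 * (2 * x - 1) by omega) 4
  rw [mul_pow, mul_pow] at h
  have : 0 < x ^ 4 := by positivity
  nlinarith

theorem glueGraph_forests :
    (∀ r k : ℕ, 1 ≤ r → 3 ≤ k →
      forestCount (glueGraph r k) = (2 ^ k - 1) ^ r ∧
        ∏ v : Option (Fin r × Fin (k - 1)), ((glueGraph r k).neighborSet v).ncard
          = 2 * r * 2 ^ (r * (k - 1))) ∧
    ∀ k : ℕ, 3 ≤ k → ∃ r : ℕ, 1 ≤ r ∧
      forestCount (glueGraph r k)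
        > ∏ v : Option (Fin r × Fin (k - 1)), ((glueGraph r k).neighborSet v).ncard := by
  refine ⟨fun r k _ hk => ?_, fun k hk => ?_⟩ <;>
    obtain ⟨n, rfl⟩ : ∃ n, k = n + 3 := ⟨k - 3, by omega⟩
  · exact ⟨glueGraph.forestCount_eq, glueGraph.prod_ncard_neighborSet⟩
  · refine ⟨4, by norm_num, ?_⟩
    rw [glueGraph.forestCount_eq, glueGraph.prod_ncard_neighborSet, gt_iff_lt, mul_comm 4, pow_mul,
      pow_succ' 2 (n + 2)]
    exact eight_mul_pow_four_lt (Nat.pow_le_pow_right two_pos (by omega : 2 ≤ n + 2))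
end
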